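/- arXiv:1909.07240 — 3 statements merged into one kernel-verified Lean document; each statement's English description precedes it below -/
import Mathlib

section
/- Let T,U,V,W be finite-dimensional Γ-graded vector spaces with commutation factor ε, let f ∈ Alt^i_ε(T,U), g ∈ Alt^j_ε(T,V), and let φ : U × V → W be bilinear. Then the exterior product f ∧_φ g, defined as the sum over (i,j)-shuffle permutations σ of π̃(σ)((fg)_φ) where (fg)_φ(v₁⊗…⊗v_{i+j}) = φ(f(v₁⊗…⊗v_i), g(v_{i+1}⊗…⊗v_{i+j})), is an element of Alt^{i+j}_ε(T,W). -/
/-- A commutation factor of an abelian group `Γ` with values in `k`. -/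
structure CommutationFactor (k Γ : Type*) [Field k] [AddCommGroup Γ] where
  ε : Γ → Γ → k
  mul_symm : ∀ a b, ε a b * ε b a = 1
  add_fst : ∀ a b c, ε (a + b) c = ε a c * ε b c
  add_snd : ∀ a b c, ε a (b + c) = ε a b * ε a c

/-- The multiplier `p(σ; v₁,…,v_n)` of a permutation with respect to degrees
`a : Fin n → Γ`. -/
def pMult {k Γ : Type*} [Field k] [AddCommGroup Γ] (ε : Γ → Γ → k) {n : ℕ}
    (σ : Equiv.Perm (Fin n)) (a : Fin n → Γ) : k :=
  ((Equiv.Perm.sign σ : ℤ) : k) *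
    ∏ q ∈ Finset.univ.filter
      (fun q : Fin n × Fin n => q.1 < q.2 ∧ σ⁻¹ q.2 < σ⁻¹ q.1), ε (a q.1) (a q.2)

/-- `f` is an ε-alternating multilinear map: on tuples of homogeneous vectors
it changes by the factor `-ε(v_l, v_{l+1})` under an adjacent transposition. -/
def IsEpsAlt {k Γ T U : Type*} [Field k] [AddCommGroup Γ]
    [AddCommGroup T] [Module k T] [AddCommGroup U] [Module k U]
    (ε : Γ → Γ → k) (𝒯 : Γ → Submodule k T) {n : ℕ}
    (f : MultilinearMap k (fun _ : Fin n => T) U) : Prop :=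
  ∀ (a : Fin n → Γ) (v : Fin n → T), (∀ m, v m ∈ 𝒯 (a m)) →
    ∀ l m : Fin n, (l : ℕ) + 1 = (m : ℕ) →
      f v = (-(ε (a l) (a m))) • f (fun q => v (Equiv.swap l m q))

/-- The value of the exterior product `f ∧_φ g` on a tuple of vectors with
degrees `a`: the sum over `(i,j)`-shuffle permutations `σ` of
`p(σ;a) • φ(f(v∘σ|first), g(v∘σ|last))`. -/
def extProdVal {k Γ T U U' W : Type*} [Field k] [AddCommGroup Γ]
    [AddCommGroup T] [Module k T] [AddCommGroup U] [Module k U]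
    [AddCommGroup U'] [Module k U'] [AddCommGroup W] [Module k W]
    (ε : Γ → Γ → k) {i j : ℕ}
    (f : MultilinearMap k (fun _ : Fin i => T) U)
    (g : MultilinearMap k (fun _ : Fin j => T) U')
    (φ : U →ₗ[k] U' →ₗ[k] W)
    (a : Fin (i + j) → Γ) (v : Fin (i + j) → T) : W :=
  ∑ σ ∈ Finset.univ.filter
      (fun σ : Equiv.Perm (Fin (i + j)) =>
        ∀ m m' : Fin (i + j), m < m' → ((m' : ℕ) < i ∨ i ≤ (m : ℕ)) → σ m < σ m'),
    pMult ε σ a •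
      φ (f (fun m => v (σ (Fin.castAdd j m)))) (g (fun m => v (σ (Fin.natAdd i m))))

/-- Swapping two adjacent values preserves strict order on pairs other than the pair itself. -/
lemma swapLt {n : ℕ} {l m x y : Fin n} (hlm : (l : ℕ) + 1 = (m : ℕ))
    (hxy : x < y) (hne : ¬(x = l ∧ y = m)) :
    Equiv.swap l m x < Equiv.swap l m y := by
  rcases eq_or_ne x l with rfl | hxl
  · have hym : y ≠ m := fun h => hne ⟨rfl, h⟩
    have hyl : y ≠ x := hxy.ne'
    rw [Equiv.swap_apply_left, Equiv.swap_apply_of_ne_of_ne hyl hym]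
    rw [Fin.lt_def] at hxy ⊢
    have h2 : (y : ℕ) ≠ (m : ℕ) := fun h => hym (Fin.ext h)
    omega
  rcases eq_or_ne x m with rfl | hxm
  · have hym : y ≠ x := hxy.ne'
    have hyl : y ≠ l := by
      intro h; subst h; rw [Fin.lt_def] at hxy; omega
    rw [Equiv.swap_apply_right, Equiv.swap_apply_of_ne_of_ne hyl hym]
    rw [Fin.lt_def] at hxy ⊢; omega
  rw [Equiv.swap_apply_of_ne_of_ne hxl hxm]
  rcases eq_or_ne y l with rfl | hyl
  · rw [Equiv.swap_apply_left, Fin.lt_def] at *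
    omega
  rcases eq_or_ne y m with rfl | hym
  · rw [Equiv.swap_apply_right, Fin.lt_def] at *
    have h2 : (x : ℕ) ≠ (l : ℕ) := fun h => hxl (Fin.ext h)
    omega
  · rwa [Equiv.swap_apply_of_ne_of_ne hyl hym]

lemma permApplyInvSelf {α : Type*} (σ : Equiv.Perm α) (x : α) : σ (σ⁻¹ x) = x :=
  Equiv.apply_symm_apply σ x

lemma permInvApplySelf {α : Type*} (σ : Equiv.Perm α) (x : α) : σ⁻¹ (σ x) = x :=
  Equiv.symm_apply_apply σ x

lemma invSwapApply {n : ℕ} (σ : Equiv.Perm (Fin n)) (l m x : Fin n) :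
    σ⁻¹ (Equiv.swap l m x) = Equiv.swap (σ⁻¹ l) (σ⁻¹ m) (σ⁻¹ x) := by
  rw [Equiv.swap_apply_apply]
  simp [Equiv.Perm.mul_apply]

lemma pMultSwapDegrees {k Γ : Type*} [Field k] [AddCommGroup Γ] (ε : Γ → Γ → k)
    {n : ℕ} {σ : Equiv.Perm (Fin n)} {l m : Fin n}
    (hlm : (l : ℕ) + 1 = (m : ℕ)) (hadj : ((σ⁻¹ m : Fin n) : ℕ) = ((σ⁻¹ l : Fin n) : ℕ) + 1)
    (a : Fin n → Γ) :
    pMult ε σ (fun q => a (Equiv.swap l m q)) = pMult ε σ a := by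
  unfold pMult
  congr 1
  refine Finset.prod_nbij' (fun q => (Equiv.swap l m q.1, Equiv.swap l m q.2))
    (fun q => (Equiv.swap l m q.1, Equiv.swap l m q.2)) ?_ ?_ ?_ ?_ ?_
  · intro q hq
    simp only [Finset.mem_filter, Finset.mem_univ, true_and] at hq ⊢
    obtain ⟨h1, h2⟩ := hq
    constructor
    · refine swapLt hlm h1 ?_
      rintro ⟨rfl, rfl⟩
      rw [Fin.lt_def] at h2; omega
    · rw [invSwapApply, invSwapApply]
      refine swapLt hadj.symm h2 ?_
      rintro ⟨e2, e1⟩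
      have hq2 : q.2 = l := by
        have := congrArg σ e2; simpa using this
      have hq1 : q.1 = m := by
        have := congrArg σ e1; simpa using this
      rw [hq1, hq2, Fin.lt_def] at h1; omega
  · intro q hq
    simp only [Finset.mem_filter, Finset.mem_univ, true_and] at hq ⊢
    obtain ⟨h1, h2⟩ := hq
    constructor
    · refine swapLt hlm h1 ?_
      rintro ⟨rfl, rfl⟩
      rw [Fin.lt_def] at h2; omega
    · rw [invSwapApply, invSwapApply]
      refine swapLt hadj.symm h2 ?_
      rintro ⟨e2, e1⟩
      have hq2 : q.2 = l := by
        have := congrArg σ e2; simpa using this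
      have hq1 : q.1 = m := by
        have := congrArg σ e1; simpa using this
      rw [hq1, hq2, Fin.lt_def] at h1; omega
  · intro q _; simp
  · intro q _; simp
  · intro q _; rfl

lemma pMultSwapMul {k Γ : Type*} [Field k] [AddCommGroup Γ] (E : CommutationFactor k Γ)
    {n : ℕ} (σ : Equiv.Perm (Fin n)) {l m : Fin n}
    (hlm : (l : ℕ) + 1 = (m : ℕ)) (a : Fin n → Γ) :
    pMult E.ε σ a
      = (-(E.ε (a l) (a m))) *
        pMult E.ε (Equiv.swap l m * σ) (fun q => a (Equiv.swap l m q)) := by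
  classical
  have hne : l ≠ m := by intro h; rw [h] at hlm; omega
  have hlltm : l < m := by rw [Fin.lt_def]; omega
  have hinv : ∀ x, (Equiv.swap l m * σ)⁻¹ x = σ⁻¹ (Equiv.swap l m x) := by
    intro x; rw [mul_inv_rev, Equiv.swap_inv]; rfl
  have hsgn : ((Equiv.Perm.sign (Equiv.swap l m * σ) : ℤ) : k)
      = -((Equiv.Perm.sign σ : ℤ) : k) := by
    rw [Equiv.Perm.sign_mul, Equiv.Perm.sign_swap hne]
    push_cast
    ring
  have hρ : σ⁻¹ l ≠ σ⁻¹ m := fun h => hne (by simpa using congrArg σ h)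
  set s := Finset.univ.filter
      (fun q : Fin n × Fin n => q.1 < q.2 ∧ σ⁻¹ q.2 < σ⁻¹ q.1) with hs
  set t := Finset.univ.filter
      (fun q : Fin n × Fin n => q.1 < q.2 ∧ (Equiv.swap l m * σ)⁻¹ q.2 < (Equiv.swap l m * σ)⁻¹ q.1) with ht
  have hpair : ∀ q : Fin n × Fin n, q.1 < q.2 →
      (Equiv.swap l m q.1, Equiv.swap l m q.2) ≠ (l, m) := by
    intro q h1 h
    have e1 : q.1 = m := by
      have := congrArg (Equiv.swap l m) (congrArg Prod.fst h)
      simpa using this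
    have e2 : q.2 = l := by
      have := congrArg (Equiv.swap l m) (congrArg Prod.snd h)
      simpa using this
    rw [e1, e2] at h1
    exact absurd hlltm (asymm h1)
  have hP : ∏ q ∈ t.erase (l, m), E.ε (a (Equiv.swap l m q.1)) (a (Equiv.swap l m q.2))
      = ∏ q ∈ s.erase (l, m), E.ε (a q.1) (a q.2) := by
    refine Finset.prod_nbij' (fun q => (Equiv.swap l m q.1, Equiv.swap l m q.2))
      (fun q => (Equiv.swap l m q.1, Equiv.swap l m q.2)) ?_ ?_ ?_ ?_ ?_
    · intro q hq
      rw [Finset.mem_erase, ht, Finset.mem_filter] at hq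
      obtain ⟨hq0, -, h1, h2⟩ := hq
      rw [hinv, hinv] at h2
      rw [Finset.mem_erase, hs, Finset.mem_filter]
      refine ⟨hpair q h1, Finset.mem_univ _, ?_, h2⟩
      refine swapLt hlm h1 ?_
      rintro ⟨e1, e2⟩
      exact hq0 (Prod.ext e1 e2)
    · intro q hq
      rw [Finset.mem_erase, hs, Finset.mem_filter] at hq
      obtain ⟨hq0, -, h1, h2⟩ := hq
      rw [Finset.mem_erase, ht, Finset.mem_filter]
      refine ⟨hpair q h1, Finset.mem_univ _, ?_, ?_⟩
      · refine swapLt hlm h1 ?_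
        rintro ⟨e1, e2⟩
        exact hq0 (Prod.ext e1 e2)
      · rw [hinv, hinv]
        simpa using h2
    · intro q _; simp
    · intro q _; simp
    · intro q _; rfl
  by_cases hc : σ⁻¹ l < σ⁻¹ m
  · have hmem_t : (l, m) ∈ t := by
      rw [ht, Finset.mem_filter]
      refine ⟨Finset.mem_univ _, hlltm, ?_⟩
      rw [hinv, hinv, Equiv.swap_apply_left, Equiv.swap_apply_right]
      exact hc
    have hnmem_s : (l, m) ∉ s := by
      rw [hs, Finset.mem_filter]
      rintro ⟨-, -, h⟩
      exact absurd hc (asymm h)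
    have hts : ∏ q ∈ t, E.ε (a (Equiv.swap l m q.1)) (a (Equiv.swap l m q.2))
        = E.ε (a m) (a l) * ∏ q ∈ s, E.ε (a q.1) (a q.2) := by
      rw [← Finset.mul_prod_erase t _ hmem_t, hP, Finset.erase_eq_of_notMem hnmem_s]
      simp
    unfold pMult
    rw [← hs, ← ht, hts, hsgn]
    have h := E.mul_symm (a l) (a m)
    linear_combination (-(((Equiv.Perm.sign σ : ℤ) : k) * ∏ q ∈ s, E.ε (a q.1) (a q.2))) * h
  · have hc' : σ⁻¹ m < σ⁻¹ l := lt_of_le_of_ne (not_lt.mp hc) (fun h => hρ h.symm)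
    have hmem_s : (l, m) ∈ s := by
      rw [hs, Finset.mem_filter]
      exact ⟨Finset.mem_univ _, hlltm, hc'⟩
    have hnmem_t : (l, m) ∉ t := by
      rw [ht, Finset.mem_filter]
      rintro ⟨-, -, h⟩
      rw [hinv, hinv, Equiv.swap_apply_left, Equiv.swap_apply_right] at h
      exact absurd h (asymm hc')
    have hst : ∏ q ∈ s, E.ε (a q.1) (a q.2)
        = E.ε (a l) (a m) * ∏ q ∈ t, E.ε (a (Equiv.swap l m q.1)) (a (Equiv.swap l m q.2)) := by
      rw [← Finset.mul_prod_erase s _ hmem_s, ← hP, Finset.erase_eq_of_notMem hnmem_t]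
    unfold pMult
    rw [← hs, ← ht, hst, hsgn]
    ring

lemma shuffleAdj {i j : ℕ} {σ : Equiv.Perm (Fin (i + j))}
    (hσ : ∀ p p' : Fin (i + j), p < p' → ((p' : ℕ) < i ∨ i ≤ (p : ℕ)) → σ p < σ p')
    {l m : Fin (i + j)} (hlm : (l : ℕ) + 1 = (m : ℕ))
    (hsb : (((σ⁻¹ l : Fin (i + j)) : ℕ) < i ↔ ((σ⁻¹ m : Fin (i + j)) : ℕ) < i)) :
    ((σ⁻¹ m : Fin (i + j)) : ℕ) = ((σ⁻¹ l : Fin (i + j)) : ℕ) + 1 := by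
  have hpl : σ (σ⁻¹ l) = l := permApplyInvSelf σ l
  have hpm : σ (σ⁻¹ m) = m := permApplyInvSelf σ m
  have hne : σ⁻¹ l ≠ σ⁻¹ m := by
    intro h
    have : l = m := by simpa [hpl, hpm] using congrArg σ h
    rw [this] at hlm; omega
  have h1 : (σ⁻¹ l : ℕ) < (σ⁻¹ m : ℕ) := by
    by_contra h
    have h2 : σ⁻¹ m < σ⁻¹ l := by
      rw [Fin.lt_def]
      have : (σ⁻¹ l : ℕ) ≠ (σ⁻¹ m : ℕ) := fun hh => hne (Fin.ext hh)
      omega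
    have h3 := hσ _ _ h2 (by omega)
    rw [hpl, hpm, Fin.lt_def] at h3
    omega
  by_contra hne2
  have h3 : (σ⁻¹ l : ℕ) + 1 < (σ⁻¹ m : ℕ) := by omega
  have hqlt : (σ⁻¹ l : ℕ) + 1 < i + j := lt_trans h3 (σ⁻¹ m).isLt
  set q : Fin (i + j) := ⟨(σ⁻¹ l : ℕ) + 1, hqlt⟩ with hqdef
  have hq1 := hσ (σ⁻¹ l) q
    (by rw [Fin.lt_def]; show ((σ⁻¹ l : Fin (i + j)) : ℕ) < ((σ⁻¹ l : Fin (i + j)) : ℕ) + 1; omega)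
    (by show ((σ⁻¹ l : Fin (i + j)) : ℕ) + 1 < i ∨ i ≤ ((σ⁻¹ l : Fin (i + j)) : ℕ); omega)
  have hq2 := hσ q (σ⁻¹ m)
    (by rw [Fin.lt_def]; show ((σ⁻¹ l : Fin (i + j)) : ℕ) + 1 < ((σ⁻¹ m : Fin (i + j)) : ℕ); omega)
    (by show ((σ⁻¹ m : Fin (i + j)) : ℕ) < i ∨ i ≤ ((σ⁻¹ l : Fin (i + j)) : ℕ) + 1; omega)
  rw [hpl] at hq1
  rw [hpm] at hq2
  rw [Fin.lt_def] at hq1 hq2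
  omega

lemma shuffleSwap {i j : ℕ} {σ : Equiv.Perm (Fin (i + j))}
    (hσ : ∀ p p' : Fin (i + j), p < p' → ((p' : ℕ) < i ∨ i ≤ (p : ℕ)) → σ p < σ p')
    {l m : Fin (i + j)} (hlm : (l : ℕ) + 1 = (m : ℕ))
    (hsb : ¬(((σ⁻¹ l : Fin (i + j)) : ℕ) < i ↔ ((σ⁻¹ m : Fin (i + j)) : ℕ) < i)) :
    ∀ p p' : Fin (i + j), p < p' → ((p' : ℕ) < i ∨ i ≤ (p : ℕ)) →
      (Equiv.swap l m * σ) p < (Equiv.swap l m * σ) p' := by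
  intro p p' h1 h2
  have h3 : σ p < σ p' := hσ p p' h1 h2
  rw [Equiv.Perm.mul_apply, Equiv.Perm.mul_apply]
  refine swapLt hlm h3 ?_
  rintro ⟨e1, e2⟩
  have hinvl : σ⁻¹ l = p := by rw [← e1, permInvApplySelf]
  have hinvm : σ⁻¹ m = p' := by rw [← e2, permInvApplySelf]
  rw [Fin.lt_def] at h1
  apply hsb
  rw [hinvl, hinvm]
  omega

/-- The exterior product of ε-alternating multilinear maps is ε-alternating. -/
theorem stmt5 {k Γ T U U' W : Type*} [Field k] [AddCommGroup Γ] [DecidableEq Γ]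
    [AddCommGroup T] [Module k T] [AddCommGroup U] [Module k U]
    [AddCommGroup U'] [Module k U'] [AddCommGroup W] [Module k W]
    (E : CommutationFactor k Γ)
    (𝒯 : Γ → Submodule k T) [DirectSum.Decomposition 𝒯]
    {i j : ℕ}
    (f : MultilinearMap k (fun _ : Fin i => T) U)
    (g : MultilinearMap k (fun _ : Fin j => T) U')
    (φ : U →ₗ[k] U' →ₗ[k] W)
    (hf : IsEpsAlt E.ε 𝒯 f) (hg : IsEpsAlt E.ε 𝒯 g) :
    ∀ (a : Fin (i + j) → Γ) (v : Fin (i + j) → T), (∀ m, v m ∈ 𝒯 (a m)) →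
      ∀ l m : Fin (i + j), (l : ℕ) + 1 = (m : ℕ) →
        extProdVal E.ε f g φ a v
          = (-(E.ε (a l) (a m))) •
            extProdVal E.ε f g φ (fun q => a (Equiv.swap l m q))
              (fun q => v (Equiv.swap l m q)) := by
  intro a v hv l m hlm
  classical
  simp only [extProdVal]
  rw [Finset.smul_sum]
  set Sh := Finset.univ.filter
      (fun σ : Equiv.Perm (Fin (i + j)) =>
        ∀ m m' : Fin (i + j), m < m' → ((m' : ℕ) < i ∨ i ≤ (m : ℕ)) → σ m < σ m') with hSh
  set same := fun σ : Equiv.Perm (Fin (i + j)) =>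
      (((σ⁻¹ l : Fin (i + j)) : ℕ) < i ↔ ((σ⁻¹ m : Fin (i + j)) : ℕ) < i) with hsamedef
  have hsplit : ∀ (H : Equiv.Perm (Fin (i + j)) → W),
      ∑ σ ∈ Sh, H σ
        = ∑ σ ∈ Sh.filter same, H σ + ∑ σ ∈ Sh.filter (fun σ => ¬ same σ), H σ :=
    fun H => (Finset.sum_filter_add_sum_filter_not Sh same H).symm
  rw [hsplit, hsplit]
  congr 1
  · -- same-block case: termwise equality
    apply Finset.sum_congr rfl
    intro σ hσ
    obtain ⟨hσ1, hσ2⟩ := Finset.mem_filter.mp hσ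
    have hshuf := (Finset.mem_filter.mp hσ1).2
    have hsame : ((σ⁻¹ l : Fin (i + j)) : ℕ) < i ↔ ((σ⁻¹ m : Fin (i + j)) : ℕ) < i := hσ2
    have hadj := shuffleAdj hshuf hlm hsame
    have hpmeq := pMultSwapDegrees E.ε hlm hadj a
    by_cases hpl : ((σ⁻¹ l : Fin (i + j)) : ℕ) < i
    · -- both l and m land in the first block
      have hpm : ((σ⁻¹ m : Fin (i + j)) : ℕ) < i := hsame.mp hpl
      have hgeq : (fun q : Fin j => v (Equiv.swap l m (σ (Fin.natAdd i q))))
          = (fun q => v (σ (Fin.natAdd i q))) := by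
        funext q
        have h1 : σ (Fin.natAdd i q) ≠ l := by
          intro h
          have h2 : σ⁻¹ l = Fin.natAdd i q := by rw [← h, permInvApplySelf]
          rw [h2] at hpl
          simp only [Fin.coe_natAdd] at hpl
          omega
        have h2 : σ (Fin.natAdd i q) ≠ m := by
          intro h
          have h2 : σ⁻¹ m = Fin.natAdd i q := by rw [← h, permInvApplySelf]
          rw [h2] at hpm
          simp only [Fin.coe_natAdd] at hpm
          omega
        rw [Equiv.swap_apply_of_ne_of_ne h1 h2]
      set p₀ : Fin i := ⟨((σ⁻¹ l : Fin (i + j)) : ℕ), hpl⟩ with hp₀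
      set p₁ : Fin i := ⟨((σ⁻¹ m : Fin (i + j)) : ℕ), hpm⟩ with hp₁
      have hc0 : Fin.castAdd j p₀ = σ⁻¹ l := Fin.ext rfl
      have hc1 : Fin.castAdd j p₁ = σ⁻¹ m := Fin.ext rfl
      have hfs := hf (fun q => a (Equiv.swap l m (σ (Fin.castAdd j q))))
        (fun q => v (Equiv.swap l m (σ (Fin.castAdd j q))))
        (fun q => hv _) p₀ p₁ (by rw [hp₀, hp₁]; exact hadj.symm)
      have e0 : Equiv.swap l m (σ (Fin.castAdd j p₀)) = m := by
        rw [hc0, permApplyInvSelf, Equiv.swap_apply_left]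
      have e1 : Equiv.swap l m (σ (Fin.castAdd j p₁)) = l := by
        rw [hc1, permApplyInvSelf, Equiv.swap_apply_right]
      simp only [e0, e1] at hfs
      have harg : (fun q : Fin i => v (Equiv.swap l m (σ (Fin.castAdd j (Equiv.swap p₀ p₁ q)))))
          = (fun q => v (σ (Fin.castAdd j q))) := by
        funext q
        rcases eq_or_ne q p₀ with rfl | h0
        · rw [Equiv.swap_apply_left, hc1, permApplyInvSelf, Equiv.swap_apply_right,
            hc0, permApplyInvSelf]
        rcases eq_or_ne q p₁ with rfl | h1
        · rw [Equiv.swap_apply_right, hc0, permApplyInvSelf, Equiv.swap_apply_left,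
            hc1, permApplyInvSelf]
        · rw [Equiv.swap_apply_of_ne_of_ne h0 h1]
          have hne1 : σ (Fin.castAdd j q) ≠ l := by
            intro h
            apply h0
            have h2 : Fin.castAdd j q = σ⁻¹ l := by rw [← h, permInvApplySelf]
            have h3 := congrArg Fin.val h2
            simp only [Fin.coe_castAdd] at h3
            exact Fin.ext (by rw [hp₀]; exact h3)
          have hne2 : σ (Fin.castAdd j q) ≠ m := by
            intro h
            apply h1
            have h2 : Fin.castAdd j q = σ⁻¹ m := by rw [← h, permInvApplySelf]
            have h3 := congrArg Fin.val h2
            simp only [Fin.coe_castAdd] at h3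
            exact Fin.ext (by rw [hp₁]; exact h3)
          rw [Equiv.swap_apply_of_ne_of_ne hne1 hne2]
      rw [harg] at hfs
      rw [hfs, hgeq, hpmeq, map_smul, LinearMap.smul_apply, smul_smul, smul_smul]
      congr 1
      have h := E.mul_symm (a l) (a m)
      linear_combination (-(pMult E.ε σ a)) * h
    · -- both l and m land in the second block
      have hpm : ¬ ((σ⁻¹ m : Fin (i + j)) : ℕ) < i := fun h => hpl (hsame.mpr h)
      have hfeq : (fun q : Fin i => v (Equiv.swap l m (σ (Fin.castAdd j q))))
          = (fun q => v (σ (Fin.castAdd j q))) := by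
        funext q
        have h1 : σ (Fin.castAdd j q) ≠ l := by
          intro h
          have h2 : σ⁻¹ l = Fin.castAdd j q := by rw [← h, permInvApplySelf]
          rw [h2] at hpl
          simp only [Fin.coe_castAdd] at hpl
          exact hpl q.isLt
        have h2 : σ (Fin.castAdd j q) ≠ m := by
          intro h
          have h2 : σ⁻¹ m = Fin.castAdd j q := by rw [← h, permInvApplySelf]
          rw [h2] at hpm
          simp only [Fin.coe_castAdd] at hpm
          exact hpm q.isLt
        rw [Equiv.swap_apply_of_ne_of_ne h1 h2]
      have hpl' : i ≤ ((σ⁻¹ l : Fin (i + j)) : ℕ) := not_lt.mp hpl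
      have hpm' : i ≤ ((σ⁻¹ m : Fin (i + j)) : ℕ) := not_lt.mp hpm
      have hlt0 : ((σ⁻¹ l : Fin (i + j)) : ℕ) - i < j := by
        have := (σ⁻¹ l : Fin (i + j)).isLt; omega
      have hlt1 : ((σ⁻¹ m : Fin (i + j)) : ℕ) - i < j := by
        have := (σ⁻¹ m : Fin (i + j)).isLt; omega
      set p₀ : Fin j := ⟨((σ⁻¹ l : Fin (i + j)) : ℕ) - i, hlt0⟩ with hp₀
      set p₁ : Fin j := ⟨((σ⁻¹ m : Fin (i + j)) : ℕ) - i, hlt1⟩ with hp₁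
      have hc0 : Fin.natAdd i p₀ = σ⁻¹ l := by
        apply Fin.ext
        simp only [Fin.coe_natAdd, hp₀]
        omega
      have hc1 : Fin.natAdd i p₁ = σ⁻¹ m := by
        apply Fin.ext
        simp only [Fin.coe_natAdd, hp₁]
        omega
      have hgs := hg (fun q => a (Equiv.swap l m (σ (Fin.natAdd i q))))
        (fun q => v (Equiv.swap l m (σ (Fin.natAdd i q))))
        (fun q => hv _) p₀ p₁ (by rw [hp₀, hp₁]; simp only []; omega)
      have e0 : Equiv.swap l m (σ (Fin.natAdd i p₀)) = m := by
        rw [hc0, permApplyInvSelf, Equiv.swap_apply_left]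
      have e1 : Equiv.swap l m (σ (Fin.natAdd i p₁)) = l := by
        rw [hc1, permApplyInvSelf, Equiv.swap_apply_right]
      simp only [e0, e1] at hgs
      have harg : (fun q : Fin j => v (Equiv.swap l m (σ (Fin.natAdd i (Equiv.swap p₀ p₁ q)))))
          = (fun q => v (σ (Fin.natAdd i q))) := by
        funext q
        rcases eq_or_ne q p₀ with rfl | h0
        · rw [Equiv.swap_apply_left, hc1, permApplyInvSelf, Equiv.swap_apply_right,
            hc0, permApplyInvSelf]
        rcases eq_or_ne q p₁ with rfl | h1
        · rw [Equiv.swap_apply_right, hc0, permApplyInvSelf, Equiv.swap_apply_left,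
            hc1, permApplyInvSelf]
        · rw [Equiv.swap_apply_of_ne_of_ne h0 h1]
          have hne1 : σ (Fin.natAdd i q) ≠ l := by
            intro h
            apply h0
            have h2 : Fin.natAdd i q = σ⁻¹ l := by rw [← h, permInvApplySelf]
            have h3 : i + (q : ℕ) = ((σ⁻¹ l : Fin (i + j)) : ℕ) := by
              simpa [Fin.coe_natAdd] using congrArg Fin.val h2
            apply Fin.ext
            show (q : ℕ) = ((σ⁻¹ l : Fin (i + j)) : ℕ) - i
            omega
          have hne2 : σ (Fin.natAdd i q) ≠ m := by
            intro h
            apply h1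
            have h2 : Fin.natAdd i q = σ⁻¹ m := by rw [← h, permInvApplySelf]
            have h3 : i + (q : ℕ) = ((σ⁻¹ m : Fin (i + j)) : ℕ) := by
              simpa [Fin.coe_natAdd] using congrArg Fin.val h2
            apply Fin.ext
            show (q : ℕ) = ((σ⁻¹ m : Fin (i + j)) : ℕ) - i
            omega
          rw [Equiv.swap_apply_of_ne_of_ne hne1 hne2]
      rw [harg] at hgs
      rw [hfeq, hgs, hpmeq, map_smul, smul_smul, smul_smul]
      congr 1
      have h := E.mul_symm (a l) (a m)
      linear_combination (-(pMult E.ε σ a)) * h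
  · -- different-block case: reindex by left multiplication with the swap
    refine Finset.sum_nbij' (fun σ => Equiv.swap l m * σ) (fun σ => Equiv.swap l m * σ)
      ?_ ?_ ?_ ?_ ?_
    · intro σ hσ
      obtain ⟨hσ1, hσ2⟩ := Finset.mem_filter.mp hσ
      have hshuf := (Finset.mem_filter.mp hσ1).2
      refine Finset.mem_filter.mpr ⟨Finset.mem_filter.mpr
        ⟨Finset.mem_univ _, shuffleSwap hshuf hlm hσ2⟩, ?_⟩
      have hinv : ∀ x, (Equiv.swap l m * σ)⁻¹ x = σ⁻¹ (Equiv.swap l m x) := by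
        intro x; rw [mul_inv_rev, Equiv.swap_inv]; rfl
      intro hiff
      refine hσ2 ?_
      simp only [hsamedef] at hiff ⊢
      simp only [hinv, Equiv.swap_apply_left, Equiv.swap_apply_right] at hiff
      exact hiff.symm
    · intro σ hσ
      obtain ⟨hσ1, hσ2⟩ := Finset.mem_filter.mp hσ
      have hshuf := (Finset.mem_filter.mp hσ1).2
      refine Finset.mem_filter.mpr ⟨Finset.mem_filter.mpr
        ⟨Finset.mem_univ _, shuffleSwap hshuf hlm hσ2⟩, ?_⟩
      have hinv : ∀ x, (Equiv.swap l m * σ)⁻¹ x = σ⁻¹ (Equiv.swap l m x) := by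
        intro x; rw [mul_inv_rev, Equiv.swap_inv]; rfl
      intro hiff
      refine hσ2 ?_
      simp only [hsamedef] at hiff ⊢
      simp only [hinv, Equiv.swap_apply_left, Equiv.swap_apply_right] at hiff
      exact hiff.symm
    · intro σ _; exact Equiv.swap_mul_self_mul l m σ
    · intro σ _; exact Equiv.swap_mul_self_mul l m σ
    · intro σ hσ
      have hv1 : ∀ x, Equiv.swap l m ((Equiv.swap l m * σ) x) = σ x := by
        intro x; rw [Equiv.Perm.mul_apply, Equiv.swap_apply_self]
      simp only [hv1]
      rw [pMultSwapMul E σ hlm a, mul_smul]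
end

section
/- Let (g,B_g) and (h,B_h) be finite-dimensional ε-quadratic colour Lie algebras and let V, W be finite-dimensional ε-orthogonal representations of g and h respectively, with moment maps μ_V and μ_W. Equip V⊗W with the bilinear form (v⊗w, v'⊗w') := ε(w,v')(v,v')_V (w,w')_W. Then this form is non-degenerate and ε-symmetric, and the moment map of the representation of g⊕h on V⊗W satisfies μ_{V⊗W}(v⊗w, v'⊗w') = ε(w,v')( μ_V(v,v')(w,w')_W + (v,v')_V μ_W(w,w') ) for all homogeneous v,v' ∈ V, w,w' ∈ W. -/
open scoped TensorProduct

section Aux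

variable {k Γ : Type*} [Field k] [AddCommGroup Γ] [DecidableEq Γ]

theorem CommutationFactor.ne_zero (E : CommutationFactor k Γ) (a b : Γ) : E.ε a b ≠ 0 :=
  left_ne_zero_of_mul_eq_one (E.mul_symm a b)

theorem CommutationFactor.zero_snd (E : CommutationFactor k Γ) (a : Γ) : E.ε a 0 = 1 := by
  have h := E.add_snd a 0 0
  rw [add_zero] at h
  have hne := E.ne_zero a 0
  have h2 : E.ε a 0 * E.ε a 0 = E.ε a 0 * 1 := by rw [mul_one, ← h]
  exact mul_left_cancel₀ hne h2

variable {M : Type*} [AddCommGroup M] [Module k M]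

theorem pair_right_decompose (𝒜 : Γ → Submodule k M) [DirectSum.Decomposition 𝒜]
    (B : M →ₗ[k] M →ₗ[k] k)
    (hdeg : ∀ a b : Γ, a + b ≠ 0 → ∀ x ∈ 𝒜 a, ∀ y ∈ 𝒜 b, B x y = 0)
    (a : Γ) (x : M) (hx : x ∈ 𝒜 a) (z : M) :
    B x z = B x (DirectSum.decompose 𝒜 z (-a) : 𝒜 (-a)) := by
  refine DirectSum.Decomposition.inductionOn 𝒜
    (motive := fun z => B x z = B x (DirectSum.decompose 𝒜 z (-a) : 𝒜 (-a))) ?_ ?_ ?_ z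
  · simp
  · intro b m
    by_cases hb : b = (-a)
    · subst hb
      rw [DirectSum.decompose_of_mem_same 𝒜 m.2]
    · rw [DirectSum.decompose_of_mem_ne 𝒜 m.2 hb, map_zero]
      exact hdeg a b (fun h0 => hb (eq_neg_of_add_eq_zero_right h0)) x hx m m.2
  · intro m m' h h'
    rw [map_add, h, h', DirectSum.decompose_add, DirectSum.add_apply,
      Submodule.coe_add, map_add]

theorem pair_left_decompose (𝒜 : Γ → Submodule k M) [DirectSum.Decomposition 𝒜]
    (B : M →ₗ[k] M →ₗ[k] k)
    (hdeg : ∀ a b : Γ, a + b ≠ 0 → ∀ x ∈ 𝒜 a, ∀ y ∈ 𝒜 b, B x y = 0)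
    (a : Γ) (y : M) (hy : y ∈ 𝒜 a) (z : M) :
    B z y = B (DirectSum.decompose 𝒜 z (-a) : 𝒜 (-a)) y := by
  refine DirectSum.Decomposition.inductionOn 𝒜
    (motive := fun z => B z y = B (DirectSum.decompose 𝒜 z (-a) : 𝒜 (-a)) y) ?_ ?_ ?_ z
  · simp
  · intro b m
    by_cases hb : b = (-a)
    · subst hb
      rw [DirectSum.decompose_of_mem_same 𝒜 m.2]
    · rw [DirectSum.decompose_of_mem_ne 𝒜 m.2 hb, map_zero, LinearMap.zero_apply]
      exact hdeg b a (fun h0 => hb (eq_neg_of_add_eq_zero_left h0)) m m.2 y hy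
  · intro m m' h h'
    rw [map_add, LinearMap.add_apply, h, h', DirectSum.decompose_add, DirectSum.add_apply,
      Submodule.coe_add, map_add, LinearMap.add_apply]

theorem right_separating (𝒜 : Γ → Submodule k M) [DirectSum.Decomposition 𝒜]
    (E : CommutationFactor k Γ) (B : M →ₗ[k] M →ₗ[k] k)
    (hdeg : ∀ a b : Γ, a + b ≠ 0 → ∀ x ∈ 𝒜 a, ∀ y ∈ 𝒜 b, B x y = 0)
    (hsymm : ∀ a b : Γ, ∀ x ∈ 𝒜 a, ∀ y ∈ 𝒜 b, B x y = E.ε a b * B y x)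
    (hnd : ∀ x : M, (∀ y, B x y = 0) → x = 0) :
    ∀ z : M, (∀ x, B x z = 0) → z = 0 := by
  intro z hz
  refine hnd z (fun y => ?_)
  refine DirectSum.Decomposition.inductionOn 𝒜 (motive := fun y => B z y = 0) ?_ ?_ ?_ y
  · simp
  · intro a m
    rw [pair_left_decompose 𝒜 B hdeg a m m.2 z,
      hsymm (-a) a _ (DirectSum.decompose 𝒜 z (-a)).2 m m.2,
      ← pair_right_decompose 𝒜 B hdeg a m m.2 z, hz m, mul_zero]
  · intro m m' h h'
    rw [map_add, h, h', add_zero]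

end Aux

/-- The tensor product of ε-orthogonal representations: the form
`(v⊗w, v'⊗w') = ε(w,v')(v,v')(w,w')` is non-degenerate and ε-symmetric, and
the moment map of the tensor product representation is
`μ_{V⊗W}(v⊗w, v'⊗w') = ε(w,v')(μ_V(v,v')(w,w') + (v,v')μ_W(w,w'))`. -/
theorem stmt12 {k Γ Mg Mh V W : Type*} [Field k] [AddCommGroup Γ] [DecidableEq Γ]
    [AddCommGroup Mg] [Module k Mg] [AddCommGroup Mh] [Module k Mh]
    [AddCommGroup V] [Module k V] [AddCommGroup W] [Module k W]
    [FiniteDimensional k Mg] [FiniteDimensional k Mh]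
    [FiniteDimensional k V] [FiniteDimensional k W]
    (h2 : (2 : k) ≠ 0) (h3 : (3 : k) ≠ 0)
    (E : CommutationFactor k Γ)
    (𝒜 : Γ → Submodule k Mg) [DirectSum.Decomposition 𝒜]
    (ℬ : Γ → Submodule k Mh) [DirectSum.Decomposition ℬ]
    (𝒱 : Γ → Submodule k V) [DirectSum.Decomposition 𝒱]
    (𝒲 : Γ → Submodule k W) [DirectSum.Decomposition 𝒲]
    (brg : Mg →ₗ[k] Mg →ₗ[k] Mg)
    (hbrgdeg : ∀ a b : Γ, ∀ x ∈ 𝒜 a, ∀ y ∈ 𝒜 b, brg x y ∈ 𝒜 (a + b))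
    (hbrgskew : ∀ a b : Γ, ∀ x ∈ 𝒜 a, ∀ y ∈ 𝒜 b,
      brg x y = (-(E.ε a b)) • brg y x)
    (hjacg : ∀ a b c : Γ, ∀ x ∈ 𝒜 a, ∀ y ∈ 𝒜 b, ∀ z ∈ 𝒜 c,
      E.ε c a • brg x (brg y z) + E.ε a b • brg y (brg z x)
        + E.ε b c • brg z (brg x y) = 0)
    (Bg : Mg →ₗ[k] Mg →ₗ[k] k)
    (hBgdeg : ∀ a b : Γ, a + b ≠ 0 → ∀ x ∈ 𝒜 a, ∀ y ∈ 𝒜 b, Bg x y = 0)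
    (hBgsymm : ∀ a b : Γ, ∀ x ∈ 𝒜 a, ∀ y ∈ 𝒜 b, Bg x y = E.ε a b * Bg y x)
    (hBgad : ∀ a b : Γ, ∀ x ∈ 𝒜 a, ∀ y ∈ 𝒜 b, ∀ z : Mg,
      Bg (brg x y) z = -(E.ε a b) * Bg y (brg x z))
    (hBgnd : ∀ x : Mg, (∀ y, Bg x y = 0) → x = 0)
    (brh : Mh →ₗ[k] Mh →ₗ[k] Mh)
    (hbrhdeg : ∀ a b : Γ, ∀ x ∈ ℬ a, ∀ y ∈ ℬ b, brh x y ∈ ℬ (a + b))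
    (hbrhskew : ∀ a b : Γ, ∀ x ∈ ℬ a, ∀ y ∈ ℬ b,
      brh x y = (-(E.ε a b)) • brh y x)
    (hjach : ∀ a b c : Γ, ∀ x ∈ ℬ a, ∀ y ∈ ℬ b, ∀ z ∈ ℬ c,
      E.ε c a • brh x (brh y z) + E.ε a b • brh y (brh z x)
        + E.ε b c • brh z (brh x y) = 0)
    (Bh : Mh →ₗ[k] Mh →ₗ[k] k)
    (hBhdeg : ∀ a b : Γ, a + b ≠ 0 → ∀ x ∈ ℬ a, ∀ y ∈ ℬ b, Bh x y = 0)
    (hBhsymm : ∀ a b : Γ, ∀ x ∈ ℬ a, ∀ y ∈ ℬ b, Bh x y = E.ε a b * Bh y x)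
    (hBhad : ∀ a b : Γ, ∀ x ∈ ℬ a, ∀ y ∈ ℬ b, ∀ z : Mh,
      Bh (brh x y) z = -(E.ε a b) * Bh y (brh x z))
    (hBhnd : ∀ x : Mh, (∀ y, Bh x y = 0) → x = 0)
    (Bv : V →ₗ[k] V →ₗ[k] k)
    (hBvdeg : ∀ a b : Γ, a + b ≠ 0 → ∀ v ∈ 𝒱 a, ∀ w ∈ 𝒱 b, Bv v w = 0)
    (hBvsymm : ∀ a b : Γ, ∀ v ∈ 𝒱 a, ∀ w ∈ 𝒱 b, Bv v w = E.ε a b * Bv w v)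
    (hBvnd : ∀ v : V, (∀ w, Bv v w = 0) → v = 0)
    (Bw : W →ₗ[k] W →ₗ[k] k)
    (hBwdeg : ∀ a b : Γ, a + b ≠ 0 → ∀ v ∈ 𝒲 a, ∀ w ∈ 𝒲 b, Bw v w = 0)
    (hBwsymm : ∀ a b : Γ, ∀ v ∈ 𝒲 a, ∀ w ∈ 𝒲 b, Bw v w = E.ε a b * Bw w v)
    (hBwnd : ∀ v : W, (∀ w, Bw v w = 0) → v = 0)
    (ρg : Mg →ₗ[k] Module.End k V)
    (hρgdeg : ∀ a b : Γ, ∀ x ∈ 𝒜 a, ∀ v ∈ 𝒱 b, ρg x v ∈ 𝒱 (a + b))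
    (hρgmor : ∀ a b : Γ, ∀ x ∈ 𝒜 a, ∀ y ∈ 𝒜 b,
      ρg (brg x y) = ρg x * ρg y - E.ε a b • (ρg y * ρg x))
    (hρgskew : ∀ a b : Γ, ∀ x ∈ 𝒜 a, ∀ v ∈ 𝒱 b, ∀ w : V,
      Bv (ρg x v) w + E.ε a b * Bv v (ρg x w) = 0)
    (ρh : Mh →ₗ[k] Module.End k W)
    (hρhdeg : ∀ a b : Γ, ∀ x ∈ ℬ a, ∀ v ∈ 𝒲 b, ρh x v ∈ 𝒲 (a + b))
    (hρhmor : ∀ a b : Γ, ∀ x ∈ ℬ a, ∀ y ∈ ℬ b,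
      ρh (brh x y) = ρh x * ρh y - E.ε a b • (ρh y * ρh x))
    (hρhskew : ∀ a b : Γ, ∀ x ∈ ℬ a, ∀ v ∈ 𝒲 b, ∀ w : W,
      Bw (ρh x v) w + E.ε a b * Bw v (ρh x w) = 0)
    (μV : V →ₗ[k] V →ₗ[k] Mg)
    (hμV : ∀ (x : Mg) (v w : V), Bg x (μV v w) = Bv (ρg x v) w)
    (μW : W →ₗ[k] W →ₗ[k] Mh)
    (hμW : ∀ (x : Mh) (v w : W), Bh x (μW v w) = Bw (ρh x v) w)
    (BVW : (V ⊗[k] W) →ₗ[k] (V ⊗[k] W) →ₗ[k] k)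
    (hBVW : ∀ a b a' b' : Γ, ∀ v ∈ 𝒱 a, ∀ w ∈ 𝒲 b, ∀ v' ∈ 𝒱 a', ∀ w' ∈ 𝒲 b',
      BVW (v ⊗ₜ[k] w) (v' ⊗ₜ[k] w') = E.ε b a' * (Bv v v' * Bw w w'))
    (ρT : (Mg × Mh) →ₗ[k] Module.End k (V ⊗[k] W))
    (hρT : ∀ c a : Γ, ∀ (x : Mg), ∀ y ∈ ℬ c, ∀ v ∈ 𝒱 a, ∀ w : W,
      ρT (x, y) (v ⊗ₜ[k] w) = (ρg x v) ⊗ₜ[k] w + E.ε c a • (v ⊗ₜ[k] (ρh y w)))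
    (μT : (V ⊗[k] W) →ₗ[k] (V ⊗[k] W) →ₗ[k] (Mg × Mh))
    (hμT : ∀ (x : Mg × Mh) (s t : V ⊗[k] W),
      Bg x.1 (μT s t).1 + Bh x.2 (μT s t).2 = BVW (ρT x s) t) :
    (∀ a b a' b' : Γ, ∀ v ∈ 𝒱 a, ∀ w ∈ 𝒲 b, ∀ v' ∈ 𝒱 a', ∀ w' ∈ 𝒲 b',
      BVW (v ⊗ₜ[k] w) (v' ⊗ₜ[k] w')
        = E.ε (a + b) (a' + b') * BVW (v' ⊗ₜ[k] w') (v ⊗ₜ[k] w)) ∧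
    (∀ s : V ⊗[k] W, (∀ t, BVW s t = 0) → s = 0) ∧
    (∀ a b a' b' : Γ, ∀ v ∈ 𝒱 a, ∀ w ∈ 𝒲 b, ∀ v' ∈ 𝒱 a', ∀ w' ∈ 𝒲 b',
      μT (v ⊗ₜ[k] w) (v' ⊗ₜ[k] w')
        = ((E.ε b a' * Bw w w') • μV v v', (E.ε b a' * Bv v v') • μW w w')) := by
  classical
  -- extension of `hBVW` to an arbitrary first vector
  have hBVW_ext : ∀ (b a' b' : Γ) (u : V), ∀ w ∈ 𝒲 b, ∀ v' ∈ 𝒱 a', ∀ w' ∈ 𝒲 b',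
      BVW (u ⊗ₜ[k] w) (v' ⊗ₜ[k] w') = E.ε b a' * (Bv u v' * Bw w w') := by
    intro b a' b' u w hw v' hv' w' hw'
    refine DirectSum.Decomposition.inductionOn 𝒱
      (motive := fun u => BVW (u ⊗ₜ[k] w) (v' ⊗ₜ[k] w') = E.ε b a' * (Bv u v' * Bw w w'))
      ?_ ?_ ?_ u
    · simp
    · intro a m; exact hBVW a b a' b' m m.2 w hw v' hv' w' hw'
    · intro m m' h h'
      simp only [TensorProduct.add_tmul, map_add, LinearMap.add_apply, h, h']
      ring
  -- the untwisted tensor pairing, as a map to the dual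
  set Φ : (V ⊗[k] W) →ₗ[k] Module.Dual k (V ⊗[k] W) :=
    (TensorProduct.dualDistribEquiv k V W).toLinearMap ∘ₗ
      TensorProduct.map (Bv : V →ₗ[k] Module.Dual k V) (Bw : W →ₗ[k] Module.Dual k W)
    with hΦdef
  have hΦ_apply : ∀ (u : V) (x : W) (v' : V) (w' : W),
      Φ (u ⊗ₜ[k] x) (v' ⊗ₜ[k] w') = Bv u v' * Bw x w' := by
    intro u x v' w'
    simp [hΦdef, TensorProduct.dualDistribEquiv, TensorProduct.dualDistribEquivOfBasis,
      TensorProduct.dualDistrib_apply]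
  have hΦinj : Function.Injective Φ := by
    have hv : Function.Injective (Bv : V →ₗ[k] Module.Dual k V) := by
      rw [injective_iff_map_eq_zero]
      intro v hvz
      exact hBvnd v (fun w => by rw [hvz]; rfl)
    have hw : Function.Injective (Bw : W →ₗ[k] Module.Dual k W) := by
      rw [injective_iff_map_eq_zero]
      intro v hvz
      exact hBwnd v (fun w => by rw [hvz]; rfl)
    have hmap : Function.Injective
        (TensorProduct.map (Bv : V →ₗ[k] Module.Dual k V) (Bw : W →ₗ[k] Module.Dual k W)) := by
      rw [← LinearMap.lTensor_comp_rTensor, LinearMap.coe_comp]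
      exact (Module.Flat.lTensor_preserves_injective_linearMap _ hw).comp
        (Module.Flat.rTensor_preserves_injective_linearMap _ hv)
    rw [hΦdef, LinearMap.coe_comp]
    exact ((TensorProduct.dualDistribEquiv k V W).injective).comp hmap
  -- relation between BVW and the untwisted pairing
  have hBVW_eq : ∀ (s : V ⊗[k] W) (a' b' : Γ), ∀ v' ∈ 𝒱 a', ∀ w' ∈ 𝒲 b',
      BVW s (v' ⊗ₜ[k] w') = E.ε (-b') a' * Φ s (v' ⊗ₜ[k] w') := by
    intro s a' b' v' hv' w' hw'
    induction s using TensorProduct.induction_on with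
    | zero => simp
    | tmul u x =>
      refine DirectSum.Decomposition.inductionOn 𝒲
        (motive := fun x => BVW (u ⊗ₜ[k] x) (v' ⊗ₜ[k] w')
          = E.ε (-b') a' * Φ (u ⊗ₜ[k] x) (v' ⊗ₜ[k] w')) ?_ ?_ ?_ x
      · simp
      · intro b m
        rw [hBVW_ext b a' b' u m m.2 v' hv' w' hw', hΦ_apply]
        by_cases hbw : Bw (m : W) w' = 0
        · rw [hbw]; ring
        · have hb : b + b' = 0 := by
            by_contra hne
            exact hbw (hBwdeg b b' hne m m.2 w' hw')
          have he : E.ε b a' = E.ε (-b') a' := by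
            rw [eq_neg_of_add_eq_zero_left hb]
          rw [he]
      · intro m m' h h'
        simp only [TensorProduct.tmul_add, map_add, LinearMap.add_apply, h, h']
        ring
    | add s1 s2 h1 h2 =>
      simp only [map_add, LinearMap.add_apply, h1, h2]
      ring
  refine ⟨?_, ?_, ?_⟩
  · -- ε-symmetry
    intro a b a' b' v hv w hw v' hv' w' hw'
    rw [hBVW a b a' b' v hv w hw v' hv' w' hw',
      hBVW a' b' a b v' hv' w' hw' v hv w hw,
      hBvsymm a a' v hv v' hv', hBwsymm b b' w hw w' hw']
    simp only [E.add_fst, E.add_snd]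
    linear_combination (-(E.ε b a' * E.ε a a' * E.ε b b' * Bv v' v * Bw w' w)) * E.mul_symm a b'
  · -- non-degeneracy
    intro s hs
    have hhom : ∀ (a' b' : Γ), ∀ v' ∈ 𝒱 a', ∀ w' ∈ 𝒲 b', Φ s (v' ⊗ₜ[k] w') = 0 := by
      intro a' b' v' hv' w' hw'
      have h := hBVW_eq s a' b' v' hv' w' hw'
      rw [hs] at h
      exact (mul_eq_zero.mp h.symm).resolve_left (E.ne_zero _ _)
    have hΦ0 : ∀ t, Φ s t = 0 := by
      intro t
      induction t using TensorProduct.induction_on with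
      | zero => simp
      | add t1 t2 h1 h2 => rw [map_add, h1, h2, add_zero]
      | tmul v' w' =>
        refine DirectSum.Decomposition.inductionOn 𝒱
          (motive := fun v' => Φ s (v' ⊗ₜ[k] w') = 0) ?_ ?_ ?_ v'
        · simp
        · intro a' m
          refine DirectSum.Decomposition.inductionOn 𝒲
            (motive := fun w' => Φ s ((m : V) ⊗ₜ[k] w') = 0) ?_ ?_ ?_ w'
          · simp
          · intro b' m'
            exact hhom a' b' m m.2 m' m'.2
          · intro x y hx hy
            rw [TensorProduct.tmul_add, map_add, hx, hy, add_zero]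
        · intro x y hx hy
          rw [TensorProduct.add_tmul, map_add, hx, hy, add_zero]
    have hs0 : Φ s = 0 := LinearMap.ext hΦ0
    exact hΦinj (by rw [hs0, map_zero])
  · -- the moment map formula
    intro a b a' b' v hv w hw v' hv' w' hw'
    have hBgrnd := right_separating 𝒜 E Bg hBgdeg hBgsymm hBgnd
    have hBhrnd := right_separating ℬ E Bh hBhdeg hBhsymm hBhnd
    have key1 : ∀ x : Mg,
        Bg x ((μT (v ⊗ₜ[k] w) (v' ⊗ₜ[k] w')).1 - (E.ε b a' * Bw w w') • μV v v') = 0 := by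
      intro x
      have h0 := hμT (x, 0) (v ⊗ₜ[k] w) (v' ⊗ₜ[k] w')
      have hρ : ρT (x, (0 : Mh)) (v ⊗ₜ[k] w) = (ρg x v) ⊗ₜ[k] w := by
        rw [hρT 0 a x 0 (ℬ 0).zero_mem v hv w]
        simp
      rw [hρ] at h0
      simp only [map_zero, LinearMap.zero_apply, add_zero] at h0
      rw [hBVW_ext b a' b' (ρg x v) w hw v' hv' w' hw'] at h0
      rw [← hμV x v v'] at h0
      rw [map_sub, map_smul, h0, smul_eq_mul]
      ring
    have key2 : ∀ y : Mh,
        Bh y ((μT (v ⊗ₜ[k] w) (v' ⊗ₜ[k] w')).2 - (E.ε b a' * Bv v v') • μW w w') = 0 := by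
      intro y
      refine DirectSum.Decomposition.inductionOn ℬ
        (motive := fun y => Bh y ((μT (v ⊗ₜ[k] w) (v' ⊗ₜ[k] w')).2
          - (E.ε b a' * Bv v v') • μW w w') = 0) ?_ ?_ ?_ y
      · simp
      · intro c m
        have h0 := hμT ((0 : Mg), (m : Mh)) (v ⊗ₜ[k] w) (v' ⊗ₜ[k] w')
        have hρ : ρT ((0 : Mg), (m : Mh)) (v ⊗ₜ[k] w)
            = E.ε c a • (v ⊗ₜ[k] (ρh m w)) := by
          rw [hρT c a 0 m m.2 v hv w]
          simp
        rw [hρ] at h0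
        simp only [map_zero, LinearMap.zero_apply, zero_add] at h0
        rw [map_smul, LinearMap.smul_apply, smul_eq_mul] at h0
        rw [hBVW a (c + b) a' b' v hv _ (hρhdeg c b m m.2 w hw) v' hv' w' hw'] at h0
        rw [← hμW m w w'] at h0
        rw [map_sub, map_smul, h0, smul_eq_mul, E.add_fst]
        by_cases hbv : Bv v v' = 0
        · rw [hbv]; ring
        · have ha : a + a' = 0 := by
            by_contra hne
            exact hbv (hBvdeg a a' hne v hv v' hv')
          have hca : E.ε c a * E.ε c a' = 1 := by
            rw [← E.add_snd, ha, E.zero_snd]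
          linear_combination (E.ε b a' * Bv v v' * Bh m (μW w w')) * hca
      · intro m m' h h'
        rw [map_add, LinearMap.add_apply, h, h', add_zero]
    have e1 := sub_eq_zero.mp (hBgrnd _ key1)
    have e2 := sub_eq_zero.mp (hBhrnd _ key2)
    exact Prod.ext e1 e2
end

section
/- Let ρ : g → so_ε(V,( , )) be a finite-dimensional special ε-orthogonal representation of a finite-dimensional ε-quadratic colour Lie algebra, with covariants μ ∈ Alt²_ε(V,g), ψ ∈ Alt³_ε(V,V), Q ∈ Alt⁴_ε(V). Then ψ(v₁,v₂,v₃) = 3(μ(v₁,v₂)(v₃) − μ_can(v₁,v₂)(v₃)) and Q(v₁,v₂,v₃,v₄) = 4(v₁, ψ(v₂,v₃,v₄)) for all homogeneous v₁,…,v₄ ∈ V. -/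
/-- For a special ε-orthogonal representation with covariants `μ`, `ψ`, `Q`,
one has `ψ(v₁,v₂,v₃) = 3(μ(v₁,v₂)(v₃) − μ_can(v₁,v₂)(v₃))` and
`Q(v₁,v₂,v₃,v₄) = 4(v₁, ψ(v₂,v₃,v₄))`. -/
theorem stmt16 {k Γ Mg V : Type*} [Field k] [AddCommGroup Γ] [DecidableEq Γ]
    [AddCommGroup Mg] [Module k Mg] [AddCommGroup V] [Module k V]
    [FiniteDimensional k Mg] [FiniteDimensional k V]
    (h2 : (2 : k) ≠ 0) (h3 : (3 : k) ≠ 0)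
    (E : CommutationFactor k Γ)
    (𝒜 : Γ → Submodule k Mg) [DirectSum.Decomposition 𝒜]
    (𝒱 : Γ → Submodule k V) [DirectSum.Decomposition 𝒱]
    (br : Mg →ₗ[k] Mg →ₗ[k] Mg)
    (hbrdeg : ∀ a b : Γ, ∀ x ∈ 𝒜 a, ∀ y ∈ 𝒜 b, br x y ∈ 𝒜 (a + b))
    (hbrskew : ∀ a b : Γ, ∀ x ∈ 𝒜 a, ∀ y ∈ 𝒜 b, br x y = (-(E.ε a b)) • br y x)
    (hjac : ∀ a b c : Γ, ∀ x ∈ 𝒜 a, ∀ y ∈ 𝒜 b, ∀ z ∈ 𝒜 c,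
      E.ε c a • br x (br y z) + E.ε a b • br y (br z x)
        + E.ε b c • br z (br x y) = 0)
    (Bg : Mg →ₗ[k] Mg →ₗ[k] k)
    (hBgdeg : ∀ a b : Γ, a + b ≠ 0 → ∀ x ∈ 𝒜 a, ∀ y ∈ 𝒜 b, Bg x y = 0)
    (hBgsymm : ∀ a b : Γ, ∀ x ∈ 𝒜 a, ∀ y ∈ 𝒜 b, Bg x y = E.ε a b * Bg y x)
    (hBgad : ∀ a b : Γ, ∀ x ∈ 𝒜 a, ∀ y ∈ 𝒜 b, ∀ z : Mg,
      Bg (br x y) z = -(E.ε a b) * Bg y (br x z))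
    (hBgnd : ∀ x : Mg, (∀ y, Bg x y = 0) → x = 0)
    (Bv : V →ₗ[k] V →ₗ[k] k)
    (hBvdeg : ∀ a b : Γ, a + b ≠ 0 → ∀ v ∈ 𝒱 a, ∀ w ∈ 𝒱 b, Bv v w = 0)
    (hBvsymm : ∀ a b : Γ, ∀ v ∈ 𝒱 a, ∀ w ∈ 𝒱 b, Bv v w = E.ε a b * Bv w v)
    (hBvnd : ∀ v : V, (∀ w, Bv v w = 0) → v = 0)
    (ρ : Mg →ₗ[k] Module.End k V)
    (hρdeg : ∀ a b : Γ, ∀ x ∈ 𝒜 a, ∀ v ∈ 𝒱 b, ρ x v ∈ 𝒱 (a + b))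
    (hρmor : ∀ a b : Γ, ∀ x ∈ 𝒜 a, ∀ y ∈ 𝒜 b,
      ρ (br x y) = ρ x * ρ y - E.ε a b • (ρ y * ρ x))
    (hρskew : ∀ a b : Γ, ∀ x ∈ 𝒜 a, ∀ v ∈ 𝒱 b, ∀ w : V,
      Bv (ρ x v) w + E.ε a b * Bv v (ρ x w) = 0)
    (μ : V →ₗ[k] V →ₗ[k] Mg)
    (hμ : ∀ (x : Mg) (v w : V), Bg x (μ v w) = Bv (ρ x v) w)
    (hsp : ∀ a b c : Γ, ∀ A ∈ 𝒱 a, ∀ B ∈ 𝒱 b, ∀ C ∈ 𝒱 c,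
      ρ (μ A B) C + E.ε b c • ρ (μ A C) B
        = Bv A B • C + (E.ε b c * Bv A C) • B - (2 * Bv B C) • A)
    (ψm : V →ₗ[k] V →ₗ[k] V →ₗ[k] V)
    (hψ : ∀ a1 a2 a3 : Γ, ∀ v1 ∈ 𝒱 a1, ∀ v2 ∈ 𝒱 a2, ∀ v3 ∈ 𝒱 a3,
      ψm v1 v2 v3 = ρ (μ v1 v2) v3 + E.ε (a1 + a2) a3 • ρ (μ v3 v1) v2
        + E.ε a1 (a2 + a3) • ρ (μ v2 v3) v1) :
    (∀ a1 a2 a3 : Γ, ∀ v1 ∈ 𝒱 a1, ∀ v2 ∈ 𝒱 a2, ∀ v3 ∈ 𝒱 a3,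
      ψm v1 v2 v3
        = (3 : k) • (ρ (μ v1 v2) v3
            - ((E.ε a2 a3 * Bv v1 v3) • v2 - Bv v2 v3 • v1))) ∧
    (∀ a1 a2 a3 a4 : Γ, ∀ v1 ∈ 𝒱 a1, ∀ v2 ∈ 𝒱 a2, ∀ v3 ∈ 𝒱 a3, ∀ v4 ∈ 𝒱 a4,
      Bv v1 (ψm v2 v3 v4)
        - E.ε (a1 + a2 + a3) a4 * Bv v4 (ψm v1 v2 v3)
        + E.ε (a1 + a2) (a3 + a4) * Bv v3 (ψm v4 v1 v2)
        - E.ε a1 (a2 + a3 + a4) * Bv v2 (ψm v3 v4 v1)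
      = 4 * Bv v1 (ψm v2 v3 v4)) := by
  have hne : ∀ a b : Γ, E.ε a b ≠ 0 := by
    intro a b h
    have := E.mul_symm a b
    rw [h, zero_mul] at this
    exact zero_ne_one this
  have hz1 : ∀ a : Γ, E.ε a 0 = 1 := by
    intro a
    have h := E.add_snd a 0 0
    rw [zero_add] at h
    have h2 := hne a 0
    field_simp at h
    tauto
  have hz2 : ∀ a : Γ, E.ε 0 a = 1 := by
    intro a
    have h := E.add_fst 0 0 a
    rw [zero_add] at h
    have h2 := hne 0 a
    field_simp at h
    tauto
  have hneg1 : ∀ a b : Γ, E.ε a (-b) = E.ε b a := by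
    intro a b
    have h : E.ε a (-b) * E.ε a b = 1 := by
      rw [← E.add_snd, neg_add_cancel, hz1]
    exact mul_right_cancel₀ (hne a b) (by rw [h]; linear_combination - E.mul_symm a b)
  have hneg2 : ∀ a b : Γ, E.ε (-a) b = E.ε b a := by
    intro a b
    have h : E.ε (-a) b * E.ε a b = 1 := by
      rw [← E.add_fst, neg_add_cancel, hz2]
    exact mul_right_cancel₀ (hne a b) (by rw [h]; linear_combination - E.mul_symm a b)
  classical
  -- nondegeneracy of Bg in the second slot, given vanishing against homogeneous elements
  have hBgnd2 : ∀ y : Mg, (∀ c : Γ, ∀ x ∈ 𝒜 c, Bg x y = 0) → y = 0 := by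
    intro y hy
    have key : ∀ c : Γ, ∀ z ∈ 𝒜 c, Bg y z = 0 := by
      intro c z hz
      have hy' := DirectSum.sum_support_decompose 𝒜 y
      calc Bg y z = Bg (∑ d ∈ (DirectSum.decompose 𝒜 y).support,
            ((DirectSum.decompose 𝒜 y) d : Mg)) z := by rw [hy']
        _ = ∑ d ∈ (DirectSum.decompose 𝒜 y).support,
            Bg ((DirectSum.decompose 𝒜 y) d : Mg) z := by
              rw [map_sum, LinearMap.sum_apply]
        _ = 0 := by
            apply Finset.sum_eq_zero
            intro d hd
            by_cases hdc : d + c = 0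
            · have hsym := hBgsymm d c ((DirectSum.decompose 𝒜 y) d : Mg)
                (SetLike.coe_mem _) z hz
              have hzy : Bg z ((DirectSum.decompose 𝒜 y) d : Mg) = 0 := by
                have h0 : Bg z y = 0 := hy c z hz
                have : Bg z y = Bg z ((DirectSum.decompose 𝒜 y) d : Mg) := by
                  conv_lhs => rw [← hy']
                  rw [map_sum]
                  refine Finset.sum_eq_single_of_mem d hd ?_
                  intro d' _ hne'
                  refine hBgdeg c d' ?_ z hz _ (SetLike.coe_mem _)
                  intro hcd'
                  apply hne'
                  have h1 : d' = -c := eq_neg_of_add_eq_zero_right hcd'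
                  have h2 : d = -c := eq_neg_of_add_eq_zero_left hdc
                  rw [h1, h2]
                rw [← this, h0]
              rw [hsym, hzy, mul_zero]
            · exact hBgdeg d c hdc _ (SetLike.coe_mem _) z hz
    have hall : ∀ z : Mg, Bg y z = 0 := by
      intro z
      induction z using DirectSum.Decomposition.inductionOn 𝒜 with
      | zero => simp
      | @homogeneous c m => exact key c m (SetLike.coe_mem m)
      | add m m' hm hm' => rw [map_add, hm, hm', add_zero]
    exact hBgnd y hall
  -- μ v w is homogeneous of degree a + b
  have hμdeg : ∀ a b : Γ, ∀ v ∈ 𝒱 a, ∀ w ∈ 𝒱 b, μ v w ∈ 𝒜 (a + b) := by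
    intro a b v hv w hw
    set m := μ v w with hm
    have claim : ∀ d : Γ, d ≠ a + b → ((DirectSum.decompose 𝒜 m) d : Mg) = 0 := by
      intro d hd
      apply hBgnd2
      intro c x hx
      by_cases hcd : c + d = 0
      · by_cases hds : d ∈ (DirectSum.decompose 𝒜 m).support
        · have heq : Bg x m = Bg x ((DirectSum.decompose 𝒜 m) d : Mg) := by
            conv_lhs => rw [← DirectSum.sum_support_decompose 𝒜 m]
            rw [map_sum]
            refine Finset.sum_eq_single_of_mem d hds ?_
            intro d' _ hne'
            refine hBgdeg c d' ?_ x hx _ (SetLike.coe_mem _)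
            intro hcd'
            exact hne' ((eq_neg_of_add_eq_zero_right hcd').trans
              (eq_neg_of_add_eq_zero_right hcd).symm)
          rw [← heq, hm, hμ]
          refine hBvdeg (c + a) b ?_ _ (hρdeg c a x hx v hv) w hw
          intro h0
          apply hd
          have hc : c = -d := eq_neg_of_add_eq_zero_left hcd
          rw [hc] at h0
          have : a + b = d := by linear_combination (norm := abel) h0
          rw [this]
        · rw [DFinsupp.notMem_support_iff] at hds
          rw [hds, ZeroMemClass.coe_zero, map_zero]
      · exact hBgdeg c d hcd x hx _ (SetLike.coe_mem _)
    rw [← DirectSum.sum_support_decompose 𝒜 m]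
    refine Submodule.sum_mem _ ?_
    intro d hd
    by_cases hd2 : d = a + b
    · rw [← hd2]; exact SetLike.coe_mem _
    · rw [claim d hd2]; exact zero_mem _
  -- ε-skew-symmetry of μ
  have hμskew : ∀ a b : Γ, ∀ v ∈ 𝒱 a, ∀ w ∈ 𝒱 b, μ v w = (-(E.ε a b)) • μ w v := by
    intro a b v hv w hw
    have hzero : μ v w + E.ε a b • μ w v = 0 := by
      apply hBgnd2
      intro c x hx
      rw [map_add, map_smul, smul_eq_mul, hμ, hμ]
      have t3 := hρskew c a x hx v hv w
      have t4 := hBvsymm a (c + b) v hv (ρ x w) (hρdeg c b x hx w hw)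
      have t5 := E.add_snd a c b
      have t6 := E.mul_symm c a
      linear_combination t3 - E.ε c a * t4 - (E.ε c a * Bv (ρ x w) v) * t5
        - (E.ε a b * Bv (ρ x w) v) * t6
    have := eq_neg_of_add_eq_zero_left hzero
    rw [this, neg_smul]
  -- support lemmas for Bv
  have hs1 : ∀ (a b : Γ) (v w : V), v ∈ 𝒱 a → w ∈ 𝒱 b → ∀ s t : k,
      (b = -a → s = t) → s * Bv v w = t * Bv v w := by
    intro a b v w hv hw s t hst
    by_cases h : a + b = 0
    · rw [hst (eq_neg_of_add_eq_zero_right h)]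
    · rw [hBvdeg a b h v hv w hw, mul_zero, mul_zero]
  have part1 : ∀ a1 a2 a3 : Γ, ∀ v1 ∈ 𝒱 a1, ∀ v2 ∈ 𝒱 a2, ∀ v3 ∈ 𝒱 a3,
      ψm v1 v2 v3
        = (3 : k) • (ρ (μ v1 v2) v3
            - ((E.ε a2 a3 * Bv v1 v3) • v2 - Bv v2 v3 • v1)) := by
    intro a1 a2 a3 v1 hv1 v2 hv2 v3 hv3
    have h1 := hsp a1 a2 a3 v1 hv1 v2 hv2 v3 hv3
    have h2 := hsp a2 a3 a1 v2 hv2 v3 hv3 v1 hv1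
    rw [hμskew a2 a1 v2 hv2 v1 hv1, map_smul, LinearMap.smul_apply, smul_smul,
      hBvsymm a2 a1 v2 hv2 v1 hv1, hBvsymm a3 a1 v3 hv3 v1 hv1] at h2
    -- solve h1 for ρ (μ v1 v3) v2
    have E2 : ρ (μ v1 v3) v2 = (E.ε a3 a2) • ((Bv v1 v2) • v3
        + (E.ε a2 a3 * Bv v1 v3) • v2 - (2 * Bv v2 v3) • v1 - ρ (μ v1 v2) v3) := by
      have h1' : E.ε a2 a3 • ρ (μ v1 v3) v2 = (Bv v1 v2) • v3
          + (E.ε a2 a3 * Bv v1 v3) • v2 - (2 * Bv v2 v3) • v1 - ρ (μ v1 v2) v3 :=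
        eq_sub_of_add_eq' h1
      rw [← h1', smul_smul, E.mul_symm, one_smul]
    have E3 : ρ (μ v2 v3) v1 = (Bv v2 v3) • v1
        + (E.ε a3 a1 * (E.ε a2 a1 * Bv v1 v2)) • v3 - (2 * (E.ε a3 a1 * Bv v1 v3)) • v2
        + (E.ε a3 a1 * E.ε a2 a1) • ρ (μ v1 v2) v3 := by
      have h2' := eq_sub_of_add_eq h2
      rw [mul_neg, neg_smul, sub_neg_eq_add] at h2'
      rw [h2']
    rw [hψ a1 a2 a3 v1 hv1 v2 hv2 v3 hv3,
      hμskew a3 a1 v3 hv3 v1 hv1, map_smul, LinearMap.smul_apply, smul_smul,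
      E2, E3]
    have f1 := hs1 a2 a3 v2 v3 hv2 hv3
    have f2 := hs1 a1 a3 v1 v3 hv1 hv3
    simp only [E.add_fst, E.add_snd]
    have r12 := E.mul_symm a1 a2
    have r13 := E.mul_symm a1 a3
    have r23 := E.mul_symm a2 a3
    have f2fact : E.ε a1 a2 * Bv v1 v3 = E.ε a2 a3 * Bv v1 v3 :=
      hs1 a1 a3 v1 v3 hv1 hv3 _ _ (by intro h; subst h; rw [hneg1])
    have f1fact : (E.ε a1 a2 * E.ε a1 a3) * Bv v2 v3 = 1 * Bv v2 v3 :=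
      hs1 a2 a3 v2 v3 hv2 hv3 _ _
        (by intro h; subst h; rw [hneg1]; exact E.mul_symm a1 a2)
    match_scalars
    · linear_combination (E.ε a2 a3 * E.ε a3 a2) * r13 + r23 + (E.ε a1 a2 * E.ε a2 a1) * r13 + r12
    · linear_combination (Bv v1 v2) * ((E.ε a1 a2 * E.ε a2 a1) * r13 + r12 - (E.ε a2 a3 * E.ε a3 a2) * r13 - r23)
    · linear_combination (-(E.ε a2 a3 * Bv v1 v3)) * ((E.ε a2 a3 * E.ε a3 a2) * r13 + r23) + (-2 * (E.ε a1 a2 * Bv v1 v3)) * r13 - 2 * f2fact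
    · linear_combination (2 * Bv v2 v3) * ((E.ε a2 a3 * E.ε a3 a2) * r13 + r23) + f1fact
  -- swap lemmas for ψ
  have hψ12 : ∀ a1 a2 a3 : Γ, ∀ v1 ∈ 𝒱 a1, ∀ v2 ∈ 𝒱 a2, ∀ v3 ∈ 𝒱 a3,
      ψm v1 v2 v3 = (-(E.ε a1 a2)) • ψm v2 v1 v3 := by
    intro a1 a2 a3 v1 hv1 v2 hv2 v3 hv3
    rw [hψ a1 a2 a3 v1 hv1 v2 hv2 v3 hv3, hψ a2 a1 a3 v2 hv2 v1 hv1 v3 hv3,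
      hμskew a3 a1 v3 hv3 v1 hv1, hμskew a2 a1 v2 hv2 v1 hv1,
      hμskew a3 a2 v3 hv3 v2 hv2]
    simp only [map_smul, LinearMap.smul_apply, smul_smul, E.add_fst, E.add_snd]
    match_scalars
    · linear_combination - E.mul_symm a1 a2
    · linear_combination - E.ε a2 a3 * E.mul_symm a1 a3 + E.ε a2 a3 * E.mul_symm a1 a2
    · linear_combination (-(E.ε a1 a2 * E.ε a1 a3)) * E.mul_symm a2 a3
  have hψ23 : ∀ a1 a2 a3 : Γ, ∀ v1 ∈ 𝒱 a1, ∀ v2 ∈ 𝒱 a2, ∀ v3 ∈ 𝒱 a3,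
      ψm v1 v2 v3 = (-(E.ε a2 a3)) • ψm v1 v3 v2 := by
    intro a1 a2 a3 v1 hv1 v2 hv2 v3 hv3
    rw [hψ a1 a2 a3 v1 hv1 v2 hv2 v3 hv3, hψ a1 a3 a2 v1 hv1 v3 hv3 v2 hv2,
      hμskew a3 a1 v3 hv3 v1 hv1, hμskew a2 a1 v2 hv2 v1 hv1,
      hμskew a3 a2 v3 hv3 v2 hv2]
    simp only [map_smul, LinearMap.smul_apply, smul_smul, E.add_fst, E.add_snd]
    match_scalars
    · linear_combination (-(E.ε a1 a2 * E.ε a2 a1)) * E.mul_symm a2 a3 - E.mul_symm a1 a2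
    · linear_combination - E.ε a2 a3 * E.mul_symm a1 a3
    · linear_combination (-(E.ε a1 a2 * E.ε a1 a3)) * E.mul_symm a2 a3
  -- adjointness of ρ with respect to Bv
  have hadj : ∀ (c : Γ) (x : Mg), x ∈ 𝒜 c → ∀ (a : Γ) (v : V), v ∈ 𝒱 a → ∀ w : V,
      Bv v (ρ x w) = -(E.ε a c) * Bv (ρ x v) w := by
    intro c x hx a v hv w
    have h := hρskew c a x hx v hv w
    linear_combination (E.ε a c) * h - (Bv v (ρ x w)) * E.mul_symm a c
  -- two-factor support lemma
  have hs2 : ∀ (a b c d : Γ) (v w u z : V), v ∈ 𝒱 a → w ∈ 𝒱 b → u ∈ 𝒱 c → z ∈ 𝒱 d →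
      ∀ s t : k, (b = -a → d = -c → s = t) → s * (Bv v w * Bv u z) = t * (Bv v w * Bv u z) := by
    intro a b c d v w u z hv hw hu hz s t hst
    by_cases hh1 : a + b = 0
    · by_cases hh2 : c + d = 0
      · rw [hst (eq_neg_of_add_eq_zero_right hh1) (eq_neg_of_add_eq_zero_right hh2)]
      · rw [hBvdeg c d hh2 u hu z hz, mul_zero, mul_zero, mul_zero]
    · rw [hBvdeg a b hh1 v hv w hw, zero_mul, mul_zero, mul_zero]
  -- key transposition property of (v₁, ψ(v₂,v₃,v₄))
  have hT : ∀ a1 a2 a3 a4 : Γ, ∀ v1 ∈ 𝒱 a1, ∀ v2 ∈ 𝒱 a2, ∀ v3 ∈ 𝒱 a3, ∀ v4 ∈ 𝒱 a4,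
      Bv v1 (ψm v2 v3 v4) = (-(E.ε a1 a2)) * Bv v2 (ψm v1 v3 v4) := by
    intro a1 a2 a3 a4 v1 hv1 v2 hv2 v3 hv3 v4 hv4
    have h2 := hsp a2 a3 a1 v2 hv2 v3 hv3 v1 hv1
    rw [hμskew a2 a1 v2 hv2 v1 hv1, map_smul, LinearMap.smul_apply, smul_smul,
      hBvsymm a2 a1 v2 hv2 v1 hv1, hBvsymm a3 a1 v3 hv3 v1 hv1] at h2
    have V1 : ρ (μ v2 v3) v1 = (Bv v2 v3) • v1
        + (E.ε a3 a1 * (E.ε a2 a1 * Bv v1 v2)) • v3 - (2 * (E.ε a3 a1 * Bv v1 v3)) • v2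
        + (E.ε a3 a1 * E.ε a2 a1) • ρ (μ v1 v2) v3 := by
      have h2' := eq_sub_of_add_eq h2
      rw [mul_neg, neg_smul, sub_neg_eq_add] at h2'
      rw [h2']
    have h1 := hsp a1 a3 a2 v1 hv1 v3 hv3 v2 hv2
    rw [hBvsymm a3 a2 v3 hv3 v2 hv2] at h1
    have V2 : ρ (μ v1 v3) v2 = (Bv v1 v3) • v2
        + (E.ε a3 a2 * Bv v1 v2) • v3 - (2 * (E.ε a3 a2 * Bv v2 v3)) • v1
        - (E.ε a3 a2) • ρ (μ v1 v2) v3 := eq_sub_of_add_eq h1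
    rw [part1 a2 a3 a4 v2 hv2 v3 hv3 v4 hv4, part1 a1 a3 a4 v1 hv1 v3 hv3 v4 hv4,
      map_smul, map_smul, map_sub, map_sub, map_sub, map_sub, map_smul, map_smul,
      map_smul, map_smul,
      hadj (a2 + a3) (μ v2 v3) (hμdeg a2 a3 v2 hv2 v3 hv3) a1 v1 hv1 v4,
      hadj (a1 + a3) (μ v1 v3) (hμdeg a1 a3 v1 hv1 v3 hv3) a2 v2 hv2 v4,
      V1, V2]
    simp only [map_add, map_sub, map_smul, LinearMap.add_apply, LinearMap.sub_apply,
      LinearMap.smul_apply, smul_eq_mul, E.add_fst, E.add_snd]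
    rw [hBvsymm a2 a1 v2 hv2 v1 hv1]
    have r12 := E.mul_symm a1 a2
    have r13 := E.mul_symm a1 a3
    have r23 := E.mul_symm a2 a3
    have gA : (E.ε a1 a2 * E.ε a1 a3) * (Bv v2 v3 * Bv v1 v4)
        = (E.ε a1 a2 * E.ε a2 a1) * (Bv v2 v3 * Bv v1 v4) :=
      hs2 a2 a3 a1 a4 v2 v3 v1 v4 hv2 hv3 hv1 hv4 _ _ (by
        intro h3 h4; subst h3; subst h4; rw [hneg1 a1 a2])
    have gB : (E.ε a1 a2 * E.ε a3 a4) * (Bv v2 v3 * Bv v1 v4)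
        = (E.ε a1 a2 * E.ε a2 a1) * (Bv v2 v3 * Bv v1 v4) :=
      hs2 a2 a3 a1 a4 v2 v3 v1 v4 hv2 hv3 hv1 hv4 _ _ (by
        intro h3 h4; subst h3; subst h4; rw [hneg2 a2 (-a1), hneg2 a1 a2])
    have gC : (E.ε a1 a2 * E.ε a2 a1) * (Bv v1 v2 * Bv v3 v4) = 1 * (Bv v1 v2 * Bv v3 v4) :=
      hs2 a1 a2 a3 a4 v1 v2 v3 v4 hv1 hv2 hv3 hv4 _ _ (by
        intro h3 _; subst h3; rw [hneg1 a1 a1, hneg2 a1 a1]; exact E.mul_symm a1 a1)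
    have gD : (E.ε a3 a4) * (Bv v1 v3 * Bv v2 v4) = (E.ε a1 a2) * (Bv v1 v3 * Bv v2 v4) :=
      hs2 a1 a3 a2 a4 v1 v3 v2 v4 hv1 hv3 hv2 hv4 _ _ (by
        intro h3 h4; subst h3; subst h4; rw [hneg2 a1 (-a2), hneg2 a2 a1])
    have gE : (E.ε a1 a2 * E.ε a2 a1 * E.ε a2 a3) * (Bv v1 v3 * Bv v2 v4)
        = (E.ε a1 a2) * (Bv v1 v3 * Bv v2 v4) :=
      hs2 a1 a3 a2 a4 v1 v3 v2 v4 hv1 hv3 hv2 hv4 _ _ (by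
        intro h3 _; subst h3; rw [hneg1 a2 a1]
        linear_combination (E.ε a1 a2) * E.mul_symm a1 a2)
    linear_combination (3:k) * ( (-(E.ε a1 a2 * E.ε a2 a1 * Bv (ρ (μ v1 v2) v3) v4)) * r13
      + (E.ε a1 a2 * E.ε a2 a1 * Bv (ρ (μ v1 v2) v3) v4) * r23
      - gA - gB + (2*(E.ε a1 a2 * E.ε a2 a1)*(Bv v2 v3 * Bv v1 v4)) * r23
      - (E.ε a1 a2 * E.ε a2 a1 * (Bv v1 v2 * Bv v3 v4)) * r13
      - (E.ε a1 a2 * E.ε a2 a1 * (Bv v1 v2 * Bv v3 v4)) * r23 - gC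
      + (2 * E.ε a1 a2 * (Bv v1 v3 * Bv v2 v4)) * r13 - gD - gE )
  refine ⟨part1, ?_⟩
  intro a1 a2 a3 a4 v1 hv1 v2 hv2 v3 hv3 v4 hv4
  have ht4 : Bv v4 (ψm v1 v2 v3)
      = -(E.ε a4 a1 * (E.ε a4 a2 * E.ε a4 a3)) * Bv v1 (ψm v2 v3 v4) := by
    rw [hT a4 a1 a2 a3 v4 hv4 v1 hv1 v2 hv2 v3 hv3,
      hψ12 a4 a2 a3 v4 hv4 v2 hv2 v3 hv3, hψ23 a2 a4 a3 v2 hv2 v4 hv4 v3 hv3,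
      map_smul, map_smul, smul_eq_mul, smul_eq_mul]
    ring
  have ht3 : Bv v3 (ψm v4 v1 v2)
      = (E.ε a3 a4 * (E.ε a3 a1 * E.ε a3 a2)
          * (E.ε a4 a1 * (E.ε a4 a2 * E.ε a4 a3))) * Bv v1 (ψm v2 v3 v4) := by
    rw [hT a3 a4 a1 a2 v3 hv3 v4 hv4 v1 hv1 v2 hv2,
      hψ12 a3 a1 a2 v3 hv3 v1 hv1 v2 hv2, hψ23 a1 a3 a2 v1 hv1 v3 hv3 v2 hv2,
      map_smul, map_smul, smul_eq_mul, smul_eq_mul, ht4]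
    ring
  have ht2 : Bv v2 (ψm v3 v4 v1)
      = (E.ε a4 a1 * E.ε a3 a1) * (-(E.ε a2 a1)) * Bv v1 (ψm v2 v3 v4) := by
    rw [hψ23 a3 a4 a1 v3 hv3 v4 hv4 v1 hv1, hψ12 a3 a1 a4 v3 hv3 v1 hv1 v4 hv4,
      map_smul, map_smul, smul_eq_mul, smul_eq_mul,
      hT a2 a1 a3 a4 v2 hv2 v1 hv1 v3 hv3 v4 hv4]
    ring
  rw [ht4, ht3, ht2]
  simp only [E.add_fst, E.add_snd]
  have s12 := E.mul_symm a1 a2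
  have s13 := E.mul_symm a1 a3
  have s14 := E.mul_symm a1 a4
  have s23 := E.mul_symm a2 a3
  have s24 := E.mul_symm a2 a4
  have s34 := E.mul_symm a3 a4
  linear_combination Bv v1 (ψm v2 v3 v4) * (
    (E.ε a2 a4 * E.ε a4 a2 * (E.ε a3 a4 * E.ε a4 a3)) * s14
      + (E.ε a3 a4 * E.ε a4 a3) * s24 + s34
    + (E.ε a1 a4 * E.ε a4 a1 * (E.ε a2 a3 * E.ε a3 a2)
        * (E.ε a2 a4 * E.ε a4 a2) * (E.ε a3 a4 * E.ε a4 a3)) * s13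
      + (E.ε a2 a3 * E.ε a3 a2 * (E.ε a2 a4 * E.ε a4 a2)
        * (E.ε a3 a4 * E.ε a4 a3)) * s14
      + (E.ε a2 a4 * E.ε a4 a2 * (E.ε a3 a4 * E.ε a4 a3)) * s23
      + (E.ε a3 a4 * E.ε a4 a3) * s24 + s34
    + (E.ε a1 a3 * E.ε a3 a1 * (E.ε a1 a4 * E.ε a4 a1)) * s12
      + (E.ε a1 a4 * E.ε a4 a1) * s13 + s14 )
end
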